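/- arXiv:2209.11601 — 7 statements merged into one kernel-verified Lean document; each statement's English description precedes it below -/
import Mathlib

section
/- If a random variable X dominates Y in the likelihood ratio order (both with finite support), then X first-order stochastically dominates Y: for every real v, P(X ≥ v) ≥ P(Y ≥ v). -/
open scoped Classical BigOperators

/-!
Split the common support at `v` into the lower part `B = {x < v}` and the upper part
`A = {x ≥ v}`. Summing the likelihood-ratio inequality over `B × A` gives
`μ(B) ν(A) ≤ μ(A) ν(B)`, and then, since both masses are `1`,
`ν(A) = ν(A) μ(A) + μ(B) ν(A) ≤ ν(A) μ(A) + μ(A) ν(B) = μ(A)`.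
-/

theorem Finset.sum_mul_sum_le_sum_mul_sum_of_mul_le {ι R : Type*} [NonUnitalNonAssocSemiring R]
    [PartialOrder R] [IsOrderedAddMonoid R] {s t : Finset ι} {f g : ι → R}
    (h : ∀ x ∈ s, ∀ y ∈ t, f x * g y ≤ f y * g x) :
    (∑ x ∈ s, f x) * ∑ y ∈ t, g y ≤ (∑ y ∈ t, f y) * ∑ x ∈ s, g x := by
  rw [Finset.sum_mul_sum, Finset.sum_mul_sum, Finset.sum_comm (s := t)]
  exact Finset.sum_le_sum fun x hx => Finset.sum_le_sum fun y hy => h x hx y hy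

theorem le_of_add_eq_one_of_mul_le {R : Type*} [CommSemiring R] [PartialOrder R]
    [IsOrderedAddMonoid R] {a b c d : R} (hab : a + b = 1) (hcd : c + d = 1)
    (h : b * c ≤ a * d) : c ≤ a :=
  calc c = c * a + b * c := by rw [mul_comm b, ← mul_add, hab, mul_one]
    _ ≤ c * a + a * d := add_le_add_right h _
    _ = a := by rw [mul_comm c, ← mul_add, hcd, mul_one]

theorem Finset.sum_filter_le_le_sum_filter_le_of_mul_le_mul {α R : Type*} [LinearOrder α]
    [CommSemiring R] [PartialOrder R] [IsOrderedAddMonoid R] {S : Finset α} {f g : α → R}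
    (hf : ∑ x ∈ S, f x = 1) (hg : ∑ x ∈ S, g x = 1)
    (hlr : ∀ x ∈ S, ∀ y ∈ S, x ≤ y → f x * g y ≤ f y * g x) (v : α) :
    ∑ x ∈ S with v ≤ x, g x ≤ ∑ x ∈ S with v ≤ x, f x := by
  have hcross : (∑ x ∈ S with ¬v ≤ x, f x) * ∑ x ∈ S with v ≤ x, g x
      ≤ (∑ x ∈ S with v ≤ x, f x) * ∑ x ∈ S with ¬v ≤ x, g x :=
    Finset.sum_mul_sum_le_sum_mul_sum_of_mul_le fun x hx y hy => by
      rw [Finset.mem_filter, not_le] at hx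
      rw [Finset.mem_filter] at hy
      exact hlr x hx.1 y hy.1 (hx.2.le.trans hy.2)
  refine le_of_add_eq_one_of_mul_le ?_ ?_ hcross
  · rwa [Finset.sum_filter_add_sum_filter_not]
  · rwa [Finset.sum_filter_add_sum_filter_not]

theorem Finsupp.sum_support_filter_eq_of_subset {α M : Type*} [AddCommMonoid M] (f : α →₀ M)
    {s : Finset α} (hs : f.support ⊆ s) (p : α → Prop) [DecidablePred p] :
    ∑ x ∈ f.support with p x, f x = ∑ x ∈ s with p x, f x := by
  refine Finset.sum_subset (Finset.filter_subset_filter p hs) fun x hx hx' => ?_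
  by_contra hfx
  exact hx' (Finset.mem_filter.2 ⟨Finsupp.mem_support_iff.2 hfx, (Finset.mem_filter.1 hx).2⟩)

theorem Finsupp.sum_support_eq_of_subset {α M : Type*} [AddCommMonoid M] (f : α →₀ M)
    {s : Finset α} (hs : f.support ⊆ s) :
    ∑ x ∈ f.support, f x = ∑ x ∈ s, f x :=
  Finset.sum_subset hs fun _ _ hx => Finsupp.notMem_support_iff.1 hx

theorem lr_dominance_implies_fosd_general
    (μ ν : ℝ →₀ ℝ)
    (hμ1 : ∑ v ∈ μ.support, μ v = 1)
    (hν1 : ∑ v ∈ ν.support, ν v = 1)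
    (hlr : ∀ v₁ v₂ : ℝ, v₁ ≤ v₂ → μ v₁ * ν v₂ ≤ μ v₂ * ν v₁) :
    ∀ v : ℝ,
      ∑ x ∈ ν.support.filter (fun x => v ≤ x), ν x
        ≤ ∑ x ∈ μ.support.filter (fun x => v ≤ x), μ x := by
  intro v
  have hμS := Finset.subset_union_left (s₁ := μ.support) (s₂ := ν.support)
  have hνS := Finset.subset_union_right (s₁ := μ.support) (s₂ := ν.support)
  rw [μ.sum_support_eq_of_subset hμS] at hμ1
  rw [ν.sum_support_eq_of_subset hνS] at hν1
  rw [μ.sum_support_filter_eq_of_subset hμS, ν.sum_support_filter_eq_of_subset hνS]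
  exact Finset.sum_filter_le_le_sum_filter_le_of_mul_le_mul hμ1 hν1 (fun x _ y _ => hlr x y) v

/-- likelihood-ratio dominance implies first-order stochastic
dominance for finitely supported distributions. Here `μ` and `ν` are the
(finitely supported) mass functions of `X` and `Y`. -/
theorem lr_dominance_implies_fosd
    (μ ν : ℝ →₀ ℝ)
    (hμ0 : ∀ v, 0 ≤ μ v) (hμ1 : ∑ v ∈ μ.support, μ v = 1)
    (hν0 : ∀ v, 0 ≤ ν v) (hν1 : ∑ v ∈ ν.support, ν v = 1)
    (hlr : ∀ v₁ v₂ : ℝ, v₁ ≤ v₂ → μ v₁ * ν v₂ ≤ μ v₂ * ν v₁) :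
    ∀ v : ℝ,
      ∑ x ∈ ν.support.filter (fun x => v ≤ x), ν x
        ≤ ∑ x ∈ μ.support.filter (fun x => v ≤ x), μ x :=
  lr_dominance_implies_fosd_general μ ν hμ1 hν1 hlr
end

section
/- If X ≥_lr Y (likelihood ratio order, finite supports) and A ⊆ ℝ is a set with P(X ∈ A) > 0 and P(Y ∈ A) > 0, then for every increasing function φ: ℝ → ℝ, E[φ(X) | X ∈ A] ≥ E[φ(Y) | Y ∈ A]. -/
/-!
Symmetrize: for `x ≤ y` the likelihood-ratio condition makes `f x * g y - f y * g x ≤ 0`, while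
monotonicity makes `φ x - φ y ≤ 0`. Hence the double sum of
`(f x * g y - f y * g x) * (φ x - φ y)` is nonnegative, and it expands to twice the
cross-multiplied difference of the two weighted averages of `φ`.
-/

open scoped Classical

namespace Finset

theorem sum_sum_mul_sub_mul_sub_eq {ι : Type*} (s : Finset ι) (f g φ : ι → ℝ) :
    ∑ x ∈ s, ∑ y ∈ s, (f x * g y - f y * g x) * (φ x - φ y) =
      2 * ((∑ x ∈ s, f x * φ x) * ∑ x ∈ s, g x -
        (∑ x ∈ s, f x) * ∑ x ∈ s, g x * φ x) := by
  have hsummand : ∀ x y, (f x * g y - f y * g x) * (φ x - φ y) =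
      f x * φ x * g y - f x * (g y * φ y) - g x * φ x * f y + g x * (f y * φ y) := by
    intros; ring
  simp only [hsummand, sum_add_distrib, sum_sub_distrib, ← mul_sum, ← sum_mul]
  ring

variable {ι : Type*} [LinearOrder ι] {s : Finset ι} {f g φ : ι → ℝ}

theorem sum_mul_sum_le_sum_mul_sum_of_lr
    (hlr : ∀ x ∈ s, ∀ y ∈ s, x ≤ y → f x * g y ≤ f y * g x) (hφ : MonotoneOn φ s) :
    (∑ x ∈ s, g x * φ x) * ∑ x ∈ s, f x ≤ (∑ x ∈ s, f x * φ x) * ∑ x ∈ s, g x := by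
  have hnonneg : 0 ≤ ∑ x ∈ s, ∑ y ∈ s, (f x * g y - f y * g x) * (φ x - φ y) := by
    refine sum_nonneg fun x hx => sum_nonneg fun y hy => ?_
    rcases le_total x y with hxy | hyx
    · exact mul_nonneg_of_nonpos_of_nonpos (sub_nonpos.2 (hlr x hx y hy hxy))
        (sub_nonpos.2 (hφ hx hy hxy))
    · exact mul_nonneg (sub_nonneg.2 (hlr y hy x hx hyx)) (sub_nonneg.2 (hφ hy hx hyx))
  rw [sum_sum_mul_sub_mul_sub_eq] at hnonneg
  linarith

theorem sum_mul_div_sum_le_of_lr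
    (hlr : ∀ x ∈ s, ∀ y ∈ s, x ≤ y → f x * g y ≤ f y * g x) (hφ : MonotoneOn φ s)
    (hf : 0 < ∑ x ∈ s, f x) (hg : 0 < ∑ x ∈ s, g x) :
    (∑ x ∈ s, g x * φ x) / ∑ x ∈ s, g x ≤ (∑ x ∈ s, f x * φ x) / ∑ x ∈ s, f x := by
  rw [div_le_div_iff₀ hg hf]
  exact sum_mul_sum_le_sum_mul_sum_of_lr hlr hφ

end Finset

theorem Finsupp.sum_filter_support_eq_of_subset {α M N : Type*} [Zero M] [AddCommMonoid N]
    (μ : α →₀ M) {s : Finset α} (hs : μ.support ⊆ s) (p : α → Prop) [DecidablePred p]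
    {F : α → N} (hF : ∀ x, μ x = 0 → F x = 0) :
    ∑ x ∈ μ.support.filter p, F x = ∑ x ∈ s.filter p, F x := by
  refine Finset.sum_subset (Finset.filter_subset_filter p hs) fun x hxs hxμ => hF x ?_
  by_contra hx
  exact hxμ (Finset.mem_filter.2 ⟨Finsupp.mem_support_iff.2 hx, (Finset.mem_filter.1 hxs).2⟩)

theorem lr_dominance_conditional_expectation_general
    (μ ν : ℝ →₀ ℝ)
    (hlr : ∀ v₁ v₂ : ℝ, v₁ ≤ v₂ → μ v₁ * ν v₂ ≤ μ v₂ * ν v₁)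
    (A : Set ℝ)
    (hμA : 0 < ∑ x ∈ μ.support.filter (fun x => x ∈ A), μ x)
    (hνA : 0 < ∑ x ∈ ν.support.filter (fun x => x ∈ A), ν x)
    (φ : ℝ → ℝ) (hφ : Monotone φ) :
    (∑ x ∈ ν.support.filter (fun x => x ∈ A), ν x * φ x)
        / (∑ x ∈ ν.support.filter (fun x => x ∈ A), ν x)
      ≤ (∑ x ∈ μ.support.filter (fun x => x ∈ A), μ x * φ x)
        / (∑ x ∈ μ.support.filter (fun x => x ∈ A), μ x) := by
  have hμs : μ.support ⊆ μ.support ∪ ν.support := Finset.subset_union_left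
  have hνs : ν.support ⊆ μ.support ∪ ν.support := Finset.subset_union_right
  have hmul (ρ : ℝ →₀ ℝ) (x : ℝ) (hx : ρ x = 0) : ρ x * φ x = 0 := by rw [hx, zero_mul]
  have hμsum := μ.sum_filter_support_eq_of_subset hμs (· ∈ A) (F := μ) fun _ => id
  have hνsum := ν.sum_filter_support_eq_of_subset hνs (· ∈ A) (F := ν) fun _ => id
  rw [hμsum] at hμA
  rw [hνsum] at hνA
  rw [μ.sum_filter_support_eq_of_subset hμs _ (hmul μ),
    ν.sum_filter_support_eq_of_subset hνs _ (hmul ν), hμsum, hνsum]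
  exact Finset.sum_mul_div_sum_le_of_lr (fun x _ y _ => hlr x y) (hφ.monotoneOn _) hμA hνA

/-- likelihood-ratio dominance implies dominance of conditional
expectations of increasing functions, given membership in any set `A`. -/
theorem lr_dominance_conditional_expectation
    (μ ν : ℝ →₀ ℝ)
    (hμ0 : ∀ v, 0 ≤ μ v) (hμ1 : ∑ v ∈ μ.support, μ v = 1)
    (hν0 : ∀ v, 0 ≤ ν v) (hν1 : ∑ v ∈ ν.support, ν v = 1)
    (hlr : ∀ v₁ v₂ : ℝ, v₁ ≤ v₂ → μ v₁ * ν v₂ ≤ μ v₂ * ν v₁)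
    (A : Set ℝ)
    (hμA : 0 < ∑ x ∈ μ.support.filter (fun x => x ∈ A), μ x)
    (hνA : 0 < ∑ x ∈ ν.support.filter (fun x => x ∈ A), ν x)
    (φ : ℝ → ℝ) (hφ : Monotone φ) :
    (∑ x ∈ ν.support.filter (fun x => x ∈ A), ν x * φ x)
        / (∑ x ∈ ν.support.filter (fun x => x ∈ A), ν x)
      ≤ (∑ x ∈ μ.support.filter (fun x => x ∈ A), μ x * φ x)
        / (∑ x ∈ μ.support.filter (fun x => x ∈ A), μ x) :=
  lr_dominance_conditional_expectation_general μ ν hlr A hμA hνA φ hφ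
end

section
/- If π̃ = a·π^Γ + (1−a)·π for some a ∈ [0,1] (a Γ-strengthening), then for every signaling structure (S, σ), the distribution of Q_Γ under P̃ dominates its distribution under P in the likelihood ratio order. -/
/-!
Under a `Γ`-strengthening the signal law `P̃` has density `a / p · Q_Γ + (1 - a)` with respect
to `P`, where `p = π(Γ)`. This density is an increasing function of `Q_Γ`, and a density that is
monotone in a statistic puts the law of that statistic under `P̃` above its law under `P` in the
likelihood ratio order.
-/

open scoped Classical

open Finset

section LikelihoodRatio

variable {S : Type*} [Fintype S]

theorem sum_levelSet_eq_mul_of_density {P Pt Q : S → ℝ} {f : ℝ → ℝ}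
    (hdens : ∀ s, 0 < P s → Pt s = f (Q s) * P s) (q : ℝ) :
    ∑ s ∈ univ.filter (fun s => 0 < P s ∧ Q s = q), Pt s
      = f q * ∑ s ∈ univ.filter (fun s => 0 < P s ∧ Q s = q), P s := by
  rw [mul_sum]
  refine sum_congr rfl fun s hs => ?_
  obtain ⟨hPs, hQs⟩ := (mem_filter.mp hs).2
  rw [hdens s hPs, hQs]

theorem levelSet_likelihoodRatio_le_of_monotone_density {P Pt Q : S → ℝ} {f : ℝ → ℝ}
    (hf : Monotone f) (hdens : ∀ s, 0 < P s → Pt s = f (Q s) * P s) {q₁ q₂ : ℝ}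
    (hq : q₁ ≤ q₂) :
    (∑ s ∈ univ.filter (fun s => 0 < P s ∧ Q s = q₁), Pt s)
        * (∑ s ∈ univ.filter (fun s => 0 < P s ∧ Q s = q₂), P s)
      ≤ (∑ s ∈ univ.filter (fun s => 0 < P s ∧ Q s = q₂), Pt s)
        * (∑ s ∈ univ.filter (fun s => 0 < P s ∧ Q s = q₁), P s) := by
  have hmass_nonneg : ∀ q, 0 ≤ ∑ s ∈ univ.filter (fun s => 0 < P s ∧ Q s = q), P s :=
    fun q => sum_nonneg fun s hs => (mem_filter.mp hs).2.1.le
  rw [sum_levelSet_eq_mul_of_density hdens, sum_levelSet_eq_mul_of_density hdens,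
    mul_assoc, mul_assoc, mul_comm (∑ s ∈ _, P s)]
  exact mul_le_mul_of_nonneg_right (hf hq) (mul_nonneg (hmass_nonneg _) (hmass_nonneg _))

end LikelihoodRatio

theorem sum_conditional_mul {Θ : Type*} [Fintype Θ] (π w : Θ → ℝ) (Γ : Finset Θ) (p : ℝ) :
    ∑ θ, (if θ ∈ Γ then π θ / p else 0) * w θ = (∑ θ ∈ Γ, π θ * w θ) / p := by
  simp only [ite_mul, zero_mul, ← sum_filter, filter_mem_eq_inter, univ_inter, sum_div]
  exact sum_congr rfl fun θ _ => div_mul_eq_mul_div _ _ _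

theorem strengthened_signal_density {Θ S : Type*} [Fintype Θ]
    (π πt : Θ → ℝ) (σ : Θ → S → ℝ) (Γ : Finset Θ) (p a : ℝ)
    (hπt : ∀ θ, πt θ = a * (if θ ∈ Γ then π θ / p else 0) + (1 - a) * π θ)
    (P Pt Q : S → ℝ)
    (hP : ∀ s, P s = ∑ θ, π θ * σ θ s)
    (hPt : ∀ s, Pt s = ∑ θ, πt θ * σ θ s)
    (hQ : ∀ s, 0 < P s → Q s = (∑ θ ∈ Γ, π θ * σ θ s) / P s)
    (s : S) (hs : 0 < P s) :
    Pt s = (a / p * Q s + (1 - a)) * P s := by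
  have hΓ : ∑ θ ∈ Γ, π θ * σ θ s = Q s * P s := by
    rw [hQ s hs, div_mul_cancel₀ _ hs.ne']
  simp only [hPt, hπt, add_mul, sum_add_distrib, mul_assoc, ← mul_sum]
  rw [sum_conditional_mul, hΓ, ← hP]
  ring

theorem strengthening_implies_optimism_general
    {Θ S : Type*} [Fintype Θ] [Fintype S]
    (π πt : Θ → ℝ) (σ : Θ → S → ℝ) (Γ : Finset Θ)
    (p : ℝ) (hp0 : 0 < p)
    (a : ℝ) (ha0 : 0 ≤ a)
    (hπt : ∀ θ, πt θ = a * (if θ ∈ Γ then π θ / p else 0) + (1 - a) * π θ)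
    (P Pt Q : S → ℝ)
    (hP : ∀ s, P s = ∑ θ, π θ * σ θ s)
    (hPt : ∀ s, Pt s = ∑ θ, πt θ * σ θ s)
    (hQ : ∀ s, 0 < P s → Q s = (∑ θ ∈ Γ, π θ * σ θ s) / P s)
    (q₁ q₂ : ℝ) (hq : q₁ ≤ q₂) :
    (∑ s ∈ Finset.univ.filter (fun s => 0 < P s ∧ Q s = q₁), Pt s)
        * (∑ s ∈ Finset.univ.filter (fun s => 0 < P s ∧ Q s = q₂), P s)
      ≤ (∑ s ∈ Finset.univ.filter (fun s => 0 < P s ∧ Q s = q₂), Pt s)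
        * (∑ s ∈ Finset.univ.filter (fun s => 0 < P s ∧ Q s = q₁), P s) := by
  have hmono : Monotone fun q => a / p * q + (1 - a) :=
    (monotone_id.const_mul (div_nonneg ha0 hp0.le)).add_const _
  exact levelSet_likelihoodRatio_le_of_monotone_density hmono
    (strengthened_signal_density π πt σ Γ p a hπt P Pt Q hP hPt hQ) hq

/-- if `π̃ = a·π^Γ + (1−a)·π` is a `Γ`-strengthening of `π`,
then for every signaling structure the distribution of `Q_Γ` under `P̃`
dominates its distribution under `P` in the likelihood ratio order. -/
theorem strengthening_implies_optimism
    {Θ S : Type*} [Fintype Θ] [Fintype S]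
    (π πt : Θ → ℝ) (σ : Θ → S → ℝ) (Γ : Finset Θ)
    (hπ0 : ∀ θ, 0 ≤ π θ) (hπ1 : ∑ θ, π θ = 1)
    (hσ0 : ∀ θ s, 0 ≤ σ θ s) (hσ1 : ∀ θ, ∑ s, σ θ s = 1)
    (p : ℝ) (hp : p = ∑ θ ∈ Γ, π θ) (hp0 : 0 < p) (hp1 : p < 1)
    (a : ℝ) (ha0 : 0 ≤ a) (ha1 : a ≤ 1)
    (hπt : ∀ θ, πt θ = a * (if θ ∈ Γ then π θ / p else 0) + (1 - a) * π θ)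
    (P Pt Q : S → ℝ)
    (hP : ∀ s, P s = ∑ θ, π θ * σ θ s)
    (hPt : ∀ s, Pt s = ∑ θ, πt θ * σ θ s)
    (hQ : ∀ s, 0 < P s → Q s = (∑ θ ∈ Γ, π θ * σ θ s) / P s)
    (q₁ q₂ : ℝ) (hq : q₁ ≤ q₂) :
    (∑ s ∈ Finset.univ.filter (fun s => 0 < P s ∧ Q s = q₁), Pt s)
        * (∑ s ∈ Finset.univ.filter (fun s => 0 < P s ∧ Q s = q₂), P s)
      ≤ (∑ s ∈ Finset.univ.filter (fun s => 0 < P s ∧ Q s = q₂), Pt s)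
        * (∑ s ∈ Finset.univ.filter (fun s => 0 < P s ∧ Q s = q₁), P s) :=
  strengthening_implies_optimism_general π πt σ Γ p hp0 a ha0 hπt P Pt Q hP hPt hQ q₁ q₂ hq
end

section
/- Conversely, suppose π̃ is a prior on Θ (with π having full support) such that for EVERY signaling structure (S, σ) on Θ, (Q_Γ, P̃) ≥_lr (Q_Γ, P). Then π̃ = a·π^Γ + (1−a)·π for some a ∈ [0,1]. -/
/-!
Test the dominance on binary signals. If `∑ θ, π θ * x θ = 0` and `|x| ≤ 1`, the kernel
`σ(±|θ) = (1 ± x θ) / 2` makes both signals equally likely under `π`, with posteriors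
`π(Γ) ± ∑_{θ ∈ Γ} π θ x θ`; comparing `P̃` on them gives `∑ θ, π̃ θ x θ ≥ 0` whenever
`∑_{θ ∈ Γ} π θ x θ > 0`. In the coordinates `w = π x`, the ratio `r = π̃ / π` is therefore a
functional nonnegative on a half of the hyperplane `∑ w = 0`, and the vectors `e_θ - e_θ'` show that
`r` is constant on `Γ` and on its complement, larger on `Γ`: this is the claimed mixture.
-/

open scoped Classical BigOperators

open Finset Filter Topology

noncomputable section

variable {Θ : Type*}

def binaryKernel (x : Θ → ℝ) (θ : Θ) (b : Bool) : ℝ := (1 + if b then x θ else -x θ) / 2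

theorem sum_mul_binaryKernel (A : Finset Θ) (ρ x : Θ → ℝ) (b : Bool) :
    ∑ θ ∈ A, ρ θ * binaryKernel x θ b =
      (∑ θ ∈ A, ρ θ + (if b then 1 else -1) * ∑ θ ∈ A, ρ θ * x θ) / 2 := by
  rw [mul_sum, ← sum_add_distrib, sum_div]
  refine sum_congr rfl fun θ _ => ?_
  cases b <;> simp only [binaryKernel, Bool.false_eq_true, if_true, if_false] <;> ring

variable {S : Type*} [Fintype Θ] [Fintype S]

def signalProb (ρ : Θ → ℝ) (σ : Θ → S → ℝ) (s : S) : ℝ := ∑ θ, ρ θ * σ θ s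

def posteriorProb (π : Θ → ℝ) (Γ : Finset Θ) (σ : Θ → S → ℝ) (s : S) : ℝ :=
  (∑ θ ∈ Γ, π θ * σ θ s) / signalProb π σ s

/-- Only signals of positive `π`-probability count: elsewhere `posteriorProb` is the junk value
`x / 0 = 0`. -/
def posteriorMass (ρ π : Θ → ℝ) (Γ : Finset Θ) (σ : Θ → S → ℝ) (q : ℝ) : ℝ :=
  ∑ s ∈ univ.filter (fun s => 0 < signalProb π σ s ∧ posteriorProb π Γ σ s = q),
    signalProb ρ σ s

/-- `(Q_Γ, P̃) ≥_lr (Q_Γ, P)` for the signaling structure `σ`, with `P̃`, `P` the signal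
distributions under the priors `ρ`, `π`. -/
def LRDominates (ρ π : Θ → ℝ) (Γ : Finset Θ) (σ : Θ → S → ℝ) : Prop :=
  ∀ q₁ q₂ : ℝ, q₁ ≤ q₂ →
    posteriorMass ρ π Γ σ q₁ * posteriorMass π π Γ σ q₂ ≤
      posteriorMass ρ π Γ σ q₂ * posteriorMass π π Γ σ q₁

theorem posteriorMass_posteriorProb_of_ne {ρ π : Θ → ℝ} {Γ : Finset Θ} {σ : Θ → Bool → ℝ}
    (hpos : ∀ b, 0 < signalProb π σ b)
    (hne : posteriorProb π Γ σ false ≠ posteriorProb π Γ σ true) (b : Bool) :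
    posteriorMass ρ π Γ σ (posteriorProb π Γ σ b) = signalProb ρ σ b := by
  have hfilter : univ.filter (fun s => 0 < signalProb π σ s ∧
      posteriorProb π Γ σ s = posteriorProb π Γ σ b) = {b} := by
    ext s
    cases s <;> cases b <;> simp [hpos, hne, hne.symm]
  rw [posteriorMass, hfilter, sum_singleton]

theorem sum_mul_nonneg_of_lrDominates_of_abs_le_one {π ρ : Θ → ℝ} {Γ : Finset Θ}
    (hπ1 : ∑ θ, π θ = 1)
    (hdom : ∀ σ : Θ → Bool → ℝ, (∀ θ s, 0 ≤ σ θ s) → (∀ θ, ∑ s, σ θ s = 1) →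
      LRDominates ρ π Γ σ)
    {x : Θ → ℝ} (hx : ∀ θ, |x θ| ≤ 1) (hx0 : ∑ θ, π θ * x θ = 0)
    (hxΓ : 0 < ∑ θ ∈ Γ, π θ * x θ) :
    0 ≤ ∑ θ, ρ θ * x θ := by
  set σ := binaryKernel x
  have hσ0 : ∀ θ b, 0 ≤ σ θ b := fun θ b => by
    have := abs_le.mp (hx θ)
    cases b <;> simp only [σ, binaryKernel, Bool.false_eq_true, if_true, if_false] <;> linarith
  have hσ1 : ∀ θ, ∑ b, σ θ b = 1 := fun θ => by
    simp only [σ, binaryKernel, Fintype.sum_bool, if_true, Bool.false_eq_true, if_false]; ring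
  have hP : ∀ b, signalProb π σ b = 1 / 2 := fun b => by
    rw [signalProb, sum_mul_binaryKernel, hπ1, hx0]; ring
  have hQ : ∀ b, posteriorProb π Γ σ b =
      ∑ θ ∈ Γ, π θ + (if b then 1 else -1) * ∑ θ ∈ Γ, π θ * x θ := fun b => by
    rw [posteriorProb, hP, sum_mul_binaryKernel]; ring
  have hlt : posteriorProb π Γ σ false < posteriorProb π Γ σ true := by
    simp only [hQ, Bool.false_eq_true, if_true, if_false]; linarith
  have h := hdom σ hσ0 hσ1 _ _ hlt.le
  have hP' : ∀ b, signalProb ρ σ b =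
      (∑ θ, ρ θ + (if b then 1 else -1) * ∑ θ, ρ θ * x θ) / 2 := sum_mul_binaryKernel _ _ _
  simp only [posteriorMass_posteriorProb_of_ne (fun b => (hP b).trans_gt one_half_pos) hlt.ne,
    hP, hP', Bool.false_eq_true, if_true, if_false] at h
  linarith

theorem sum_div_mul_nonneg_of_lrDominates {π ρ : Θ → ℝ} {Γ : Finset Θ}
    (hπ0 : ∀ θ, 0 < π θ) (hπ1 : ∑ θ, π θ = 1)
    (hdom : ∀ σ : Θ → Bool → ℝ, (∀ θ s, 0 ≤ σ θ s) → (∀ θ, ∑ s, σ θ s = 1) →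
      LRDominates ρ π Γ σ)
    {w : Θ → ℝ} (hw : ∑ θ, w θ = 0) (hwΓ : 0 < ∑ θ ∈ Γ, w θ) :
    0 ≤ ∑ θ, ρ θ / π θ * w θ := by
  set v : Θ → ℝ := fun θ => w θ / π θ
  set ε : ℝ := (‖v‖ + 1)⁻¹
  have hε : 0 < ε := by positivity
  have hπv : ∀ θ, π θ * (ε * v θ) = ε * w θ := fun θ => by
    simp only [v]; field_simp [(hπ0 θ).ne']
  have hbound : ∀ θ, |ε * v θ| ≤ 1 := fun θ => by
    rw [abs_mul, abs_of_pos hε, ← Real.norm_eq_abs, inv_mul_le_one₀ (by positivity)]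
    linarith [norm_le_pi_norm v θ]
  have h := sum_mul_nonneg_of_lrDominates_of_abs_le_one hπ1 hdom hbound
    (by simp only [hπv, ← mul_sum, hw, mul_zero])
    (by simpa only [hπv, ← mul_sum] using mul_pos hε hwΓ)
  have hρv : ∑ θ, ρ θ * (ε * v θ) = ε * ∑ θ, ρ θ / π θ * w θ := by
    rw [mul_sum]; refine sum_congr rfl fun θ _ => ?_; simp only [v]; ring
  rw [hρv] at h
  exact nonneg_of_mul_nonneg_right (by linarith) hε

end

section HalfSpace

variable {Θ : Type*} [Fintype Θ] {Γ : Finset Θ} {r : Θ → ℝ}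

theorem sum_mul_single_sub_single (r : Θ → ℝ) (θ₁ θ₂ : Θ) :
    ∑ θ, r θ * (Pi.single θ₁ 1 - Pi.single θ₂ 1 : Θ → ℝ) θ = r θ₁ - r θ₂ := by
  simp [mul_sub, sum_sub_distrib, Pi.single_apply]

/-- From the open half-space to its closure: perturb `w` by `ε • (Pi.single θg 1 - Pi.single θn 1)`
and let `ε → 0`. -/
theorem sum_mul_nonneg_of_sum_mem_nonneg
    (h : ∀ w : Θ → ℝ, ∑ θ, w θ = 0 → 0 < ∑ θ ∈ Γ, w θ → 0 ≤ ∑ θ, r θ * w θ)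
    {θg θn : Θ} (hg : θg ∈ Γ) (hn : θn ∉ Γ)
    {w : Θ → ℝ} (hw : ∑ θ, w θ = 0) (hwΓ : 0 ≤ ∑ θ ∈ Γ, w θ) :
    0 ≤ ∑ θ, r θ * w θ := by
  set e : Θ → ℝ := Pi.single θg 1 - Pi.single θn 1
  have he : ∑ θ, r θ * e θ = r θg - r θn := sum_mul_single_sub_single r θg θn
  have hpush : ∀ ε : ℝ, 0 < ε → 0 ≤ ∑ θ, r θ * w θ + ε * (r θg - r θn) := fun ε hε => by
    have hsum : ∑ θ, r θ * (w + ε • e) θ = ∑ θ, r θ * w θ + ε * (r θg - r θn) := by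
      rw [← he, mul_sum, ← sum_add_distrib]
      refine sum_congr rfl fun θ _ => ?_
      simp only [Pi.add_apply, Pi.smul_apply, smul_eq_mul]; ring
    rw [← hsum]
    exact h (w + ε • e) (by simp [sum_add_distrib, ← mul_sum, e, hw])
      (by simp [sum_add_distrib, ← mul_sum, e, hg, hn]; linarith)
  have hlim : Tendsto (fun ε : ℝ => ∑ θ, r θ * w θ + ε * (r θg - r θn)) (𝓝[>] 0)
      (𝓝 (∑ θ, r θ * w θ)) :=
    tendsto_nhdsWithin_of_tendsto_nhds (Continuous.tendsto' (by fun_prop) _ _ (by simp))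
  exact ge_of_tendsto hlim (eventually_nhdsWithin_of_forall hpush)

theorem le_of_forall_sum_mem_nonneg
    (h : ∀ w : Θ → ℝ, ∑ θ, w θ = 0 → 0 ≤ ∑ θ ∈ Γ, w θ → 0 ≤ ∑ θ, r θ * w θ)
    {θ₁ θ₂ : Θ} (hΓ : θ₂ ∈ Γ → θ₁ ∈ Γ) : r θ₂ ≤ r θ₁ := by
  have := h (Pi.single θ₁ 1 - Pi.single θ₂ 1)
    (by simp) (by simp only [Pi.sub_apply, sum_sub_distrib, sum_pi_single']; split_ifs <;> simp_all)
  rwa [← sub_nonneg, ← sum_mul_single_sub_single]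

end HalfSpace

theorem exists_strengthening_of_eq_ite_mul {Θ : Type*} [Fintype Θ] {π πt : Θ → ℝ}
    {Γ : Finset Θ} {u v : ℝ} (hπ1 : ∑ θ, π θ = 1) (hπt1 : ∑ θ, πt θ = 1) (hp0 : 0 < ∑ θ ∈ Γ, π θ)
    (hv : 0 ≤ v) (hvu : v ≤ u) (hπt : ∀ θ, πt θ = (if θ ∈ Γ then u else v) * π θ) :
    ∃ a : ℝ, 0 ≤ a ∧ a ≤ 1 ∧ ∀ θ, πt θ =
      a * (if θ ∈ Γ then π θ / ∑ θ ∈ Γ, π θ else 0) + (1 - a) * π θ := by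
  set p := ∑ θ ∈ Γ, π θ
  have hsplit : ∀ θ, πt θ = v * π θ + (u - v) * if θ ∈ Γ then π θ else 0 := fun θ => by
    rw [hπt]; split_ifs <;> ring
  have hmass : v + (u - v) * p = 1 := by
    rw [← hπt1, sum_congr rfl fun θ _ => hsplit θ, sum_add_distrib, ← mul_sum, ← mul_sum,
      sum_ite_mem, univ_inter, hπ1, mul_one]
  refine ⟨(u - v) * p, by nlinarith, by linarith, fun θ => ?_⟩
  rw [hsplit θ]
  split_ifs
  · field_simp; linear_combination π θ * hmass
  · linear_combination π θ * hmass

/-- if for every signaling structure the distribution of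
Alice's posterior `Q_Γ` under Carroll's measure `P̃` likelihood-ratio
dominates its distribution under `P`, then Carroll's prior `π̃` is a
`Γ`-strengthening of `π`. -/
theorem optimism_implies_strengthening
    {Θ : Type*} [Fintype Θ]
    (π πt : Θ → ℝ) (Γ : Finset Θ)
    (hπ0 : ∀ θ, 0 < π θ) (hπ1 : ∑ θ, π θ = 1)
    (hπt0 : ∀ θ, 0 ≤ πt θ) (hπt1 : ∑ θ, πt θ = 1)
    (p : ℝ) (hp : p = ∑ θ ∈ Γ, π θ) (hp0 : 0 < p) (hp1 : p < 1)
    (hopt : ∀ (S : Type) [Fintype S] (σ : Θ → S → ℝ),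
      (∀ θ s, 0 ≤ σ θ s) → (∀ θ, ∑ s, σ θ s = 1) →
      ∀ q₁ q₂ : ℝ, q₁ ≤ q₂ →
        (∑ s ∈ Finset.univ.filter (fun s =>
              0 < ∑ θ, π θ * σ θ s ∧
              (∑ θ ∈ Γ, π θ * σ θ s) / (∑ θ, π θ * σ θ s) = q₁),
            ∑ θ, πt θ * σ θ s)
          * (∑ s ∈ Finset.univ.filter (fun s =>
              0 < ∑ θ, π θ * σ θ s ∧
              (∑ θ ∈ Γ, π θ * σ θ s) / (∑ θ, π θ * σ θ s) = q₂),
            ∑ θ, π θ * σ θ s)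
        ≤ (∑ s ∈ Finset.univ.filter (fun s =>
              0 < ∑ θ, π θ * σ θ s ∧
              (∑ θ ∈ Γ, π θ * σ θ s) / (∑ θ, π θ * σ θ s) = q₂),
            ∑ θ, πt θ * σ θ s)
          * (∑ s ∈ Finset.univ.filter (fun s =>
              0 < ∑ θ, π θ * σ θ s ∧
              (∑ θ ∈ Γ, π θ * σ θ s) / (∑ θ, π θ * σ θ s) = q₁),
            ∑ θ, π θ * σ θ s)) :
    ∃ a : ℝ, 0 ≤ a ∧ a ≤ 1 ∧
      ∀ θ, πt θ = a * (if θ ∈ Γ then π θ / p else 0) + (1 - a) * π θ := by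
  subst hp
  set r : Θ → ℝ := fun θ => πt θ / π θ
  obtain ⟨θg, hg⟩ : Γ.Nonempty := nonempty_of_sum_ne_zero hp0.ne'
  obtain ⟨θn, hn⟩ : Γᶜ.Nonempty := nonempty_of_sum_ne_zero (f := π) <| by
    linarith [sum_add_sum_compl Γ π]
  rw [mem_compl] at hn
  -- `hopt Bool σ` is `LRDominates πt π Γ σ` with the definitions unfolded.
  have hclosed : ∀ w : Θ → ℝ, ∑ θ, w θ = 0 → 0 ≤ ∑ θ ∈ Γ, w θ → 0 ≤ ∑ θ, r θ * w θ :=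
    fun _ => sum_mul_nonneg_of_sum_mem_nonneg
      (fun _ => sum_div_mul_nonneg_of_lrDominates hπ0 hπ1 (hopt Bool)) hg hn
  have hr : ∀ θ, r θ = if θ ∈ Γ then r θg else r θn := fun θ => by
    split_ifs with hθ <;>
      exact le_antisymm (le_of_forall_sum_mem_nonneg hclosed (by simp_all))
        (le_of_forall_sum_mem_nonneg hclosed (by simp_all))
  refine exists_strengthening_of_eq_ite_mul (u := r θg) (v := r θn) hπ1 hπt1 hp0
    (div_nonneg (hπt0 θn) (hπ0 θn).le) (le_of_forall_sum_mem_nonneg hclosed fun _ => hg)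
    fun θ => ?_
  rw [← hr θ, div_mul_cancel₀ _ (hπ0 θ).ne']
end

section
/- Let Θ be a finite subset of ℝ with full-support priors π, π̃, and suppose that for all vectors x ∈ ℝ^Θ: (π·x = 0 and π^Γ·x > 0) implies π̃·x ≥ 0, where π^Γ is π conditioned on Γ ⊆ Θ, π(Γ) ∈ (0,1). Then π̃ = a·π^Γ + b·π with a, b ≥ 0 and a + b = 1. -/
open scoped Classical BigOperators

/- A linear form that is nonnegative on the open half-space `{g > 0}` of the hyperplane
`ker f` must vanish on `ker f ⊓ ker g`: along `x + s • y` its values form an affine function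
of `s` bounded below, so its slope is zero. Hence it lies in the span of `f` and `g`, and
testing at the point `y` shows that the coefficient of `g` is nonnegative. In the application
`f`, `g`, `h` pair a vector with `π`, `π` restricted to `Γ` and `π̃`, and `y = 1_Γ - p`.
Summing all coordinates gives `a + b = 1`; summing over `Γ` and using `π̃(Γ) ≤ 1` gives
`b (1 - p) ≥ 0` for the coefficient `b` of `π`. -/

section LinearOrderedField

variable {𝕜 V : Type*} [Field 𝕜] [LinearOrder 𝕜] [IsStrictOrderedRing 𝕜]
  [AddCommGroup V] [Module 𝕜 V]

lemma eq_zero_of_forall_mul_add_nonneg {a b : 𝕜} (h : ∀ s, 0 ≤ s * a + b) : a = 0 := by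
  by_contra ha
  have := h (-(b + 1) / a)
  rw [div_mul_cancel₀ _ ha] at this
  linarith

lemma LinearMap.ker_inf_ker_le_ker_of_imp_nonneg {f g h : V →ₗ[𝕜] 𝕜} {y : V}
    (hfy : f y = 0) (hgy : 0 < g y) (H : ∀ x, f x = 0 → 0 < g x → 0 ≤ h x) :
    LinearMap.ker f ⊓ LinearMap.ker g ≤ LinearMap.ker h := by
  intro x hx
  obtain ⟨hfx, hgx⟩ : f x = 0 ∧ g x = 0 := Submodule.mem_inf.1 hx
  rw [LinearMap.mem_ker]
  refine eq_zero_of_forall_mul_add_nonneg (b := h y) fun s => ?_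
  simpa [hfx, hgx, hfy] using H (s • x + y) (by simp [hfx, hfy]) (by simpa [hgx] using hgy)

lemma LinearMap.exists_eq_smul_add_smul_of_imp_nonneg {f g h : V →ₗ[𝕜] 𝕜} {y : V}
    (hfy : f y = 0) (hgy : 0 < g y) (H : ∀ x, f x = 0 → 0 < g x → 0 ≤ h x) :
    ∃ α β : 𝕜, 0 ≤ β ∧ h = α • f + β • g := by
  have hker : ⨅ i, LinearMap.ker (![f, g] i) ≤ LinearMap.ker h := fun x hx =>
    have hx := Submodule.mem_iInf _ |>.1 hx
    ker_inf_ker_le_ker_of_imp_nonneg hfy hgy H ⟨hx 0, hx 1⟩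
  obtain ⟨c, hc⟩ :=
    (Submodule.mem_span_range_iff_exists_fun 𝕜).1 (mem_span_of_iInf_ker_le_ker hker)
  simp only [Fin.sum_univ_two, Matrix.cons_val_zero, Matrix.cons_val_one] at hc
  refine ⟨c 0, c 1, ?_, hc.symm⟩
  have hhy : h y = c 1 * g y := by simp [← hc, hfy]
  exact nonneg_of_mul_nonneg_left (hhy ▸ H y hfy hgy) hgy

end LinearOrderedField

section WeightedSum

variable {ι R : Type*} [CommSemiring R]

def weightedSum (s : Finset ι) (w : ι → R) : (ι → R) →ₗ[R] R where
  toFun x := ∑ i ∈ s, w i * x i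
  map_add' x y := by simp only [Pi.add_apply, mul_add, Finset.sum_add_distrib]
  map_smul' c x := by
    simp only [Pi.smul_apply, smul_eq_mul, RingHom.id_apply, Finset.mul_sum]
    exact Finset.sum_congr rfl fun i _ => by ring

lemma weightedSum_apply (s : Finset ι) (w x : ι → R) :
    weightedSum s w x = ∑ i ∈ s, w i * x i := rfl

lemma weightedSum_const_one (s : Finset ι) (w : ι → R) :
    weightedSum s w (fun _ => 1) = ∑ i ∈ s, w i := by
  simp [weightedSum_apply]

lemma weightedSum_indicator (s t : Finset ι) (w : ι → R) :
    weightedSum s w (fun i => if i ∈ t then 1 else 0) = ∑ i ∈ s ∩ t, w i := by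
  simp [weightedSum_apply, Finset.sum_ite_mem]

lemma weightedSum_single [DecidableEq ι] (s : Finset ι) (w : ι → R) (j : ι) :
    weightedSum s w (Pi.single j 1) = if j ∈ s then w j else 0 := by
  simp [weightedSum_apply, Pi.single_apply]

end WeightedSum

theorem farkas_strengthening_general
    {Θ : Type*} [Fintype Θ]
    (π πt : Θ → ℝ) (Γ : Finset Θ)
    (hπ1 : ∑ θ, π θ = 1)
    (hπt0 : ∀ θ, 0 ≤ πt θ) (hπt1 : ∑ θ, πt θ = 1)
    (p : ℝ) (hp : p = ∑ θ ∈ Γ, π θ) (hp0 : 0 < p) (hp1 : p < 1)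
    (hx : ∀ x : Θ → ℝ,
      (∑ θ, π θ * x θ = 0) → (0 < ∑ θ ∈ Γ, π θ * x θ) →
      0 ≤ ∑ θ, πt θ * x θ) :
    ∃ a b : ℝ, 0 ≤ a ∧ 0 ≤ b ∧ a + b = 1 ∧
      ∀ θ, πt θ = a * (if θ ∈ Γ then π θ / p else 0) + b * π θ := by
  set e : Θ → ℝ := fun θ => if θ ∈ Γ then 1 else 0
  have he : ∀ s w, weightedSum s w e = ∑ θ ∈ s ∩ Γ, w θ :=
    (weightedSum_indicator · Γ ·)
  obtain ⟨α, β, hβ, hπt⟩ := LinearMap.exists_eq_smul_add_smul_of_imp_nonneg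
    (f := weightedSum Finset.univ π) (g := weightedSum Γ π) (h := weightedSum Finset.univ πt)
    (y := e - p • fun _ => 1) (by simp [he, weightedSum_const_one, hπ1, ← hp])
    (by
      simp only [map_sub, map_smul, he, Finset.inter_self, ← hp, weightedSum_const_one,
        smul_eq_mul, sub_pos]
      nlinarith) hx
  have eval : ∀ x, weightedSum Finset.univ πt x =
      α * weightedSum Finset.univ π x + β * weightedSum Γ π x := fun x => by simp [hπt]
  have htotal : α + β * p = 1 := by simpa [weightedSum_const_one, hπ1, hπt1, ← hp] using
    (eval fun _ => 1).symm
  have hΓ : ∑ θ ∈ Γ, πt θ = (α + β) * p := by simpa [he, ← hp, add_mul] using eval e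
  have hα : 0 ≤ α := by
    have : ∑ θ ∈ Γ, πt θ ≤ 1 := hπt1 ▸ Finset.sum_le_univ_sum_of_nonneg hπt0
    nlinarith
  refine ⟨β * p, α, by positivity, hα, by linarith, fun θ => ?_⟩
  have := eval (Pi.single θ 1)
  simp only [weightedSum_single, Finset.mem_univ, if_true] at this
  split_ifs at this ⊢ <;> field_simp <;> linarith

/-- Farkas step: if every vector `x` with `π·x = 0` and
`π^Γ·x > 0` satisfies `π̃·x ≥ 0`, then `π̃ = a·π^Γ + b·π` with `a, b ≥ 0`
and `a + b = 1`. -/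
theorem farkas_strengthening
    {Θ : Type*} [Fintype Θ]
    (π πt : Θ → ℝ) (Γ : Finset Θ)
    (hπ0 : ∀ θ, 0 < π θ) (hπ1 : ∑ θ, π θ = 1)
    (hπt0 : ∀ θ, 0 ≤ πt θ) (hπt1 : ∑ θ, πt θ = 1)
    (p : ℝ) (hp : p = ∑ θ ∈ Γ, π θ) (hp0 : 0 < p) (hp1 : p < 1)
    (hx : ∀ x : Θ → ℝ,
      (∑ θ, π θ * x θ = 0) → (0 < ∑ θ ∈ Γ, π θ * x θ) →
      0 ≤ ∑ θ, πt θ * x θ) :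
    ∃ a b : ℝ, 0 ≤ a ∧ 0 ≤ b ∧ a + b = 1 ∧
      ∀ θ, πt θ = a * (if θ ∈ Γ then π θ / p else 0) + b * π θ :=
  farkas_strengthening_general π πt Γ hπ1 hπt0 hπt1 p hp hp0 hp1 hx
end

section
/- If distinct upper-set structure is not assumed: suppose π̃ ≠ π and there exist two sets Γ₁, Γ₂ ⊆ Θ with π(Γ₁), π(Γ₂) ∈ (0,1) such that π̃ is simultaneously a Γ₁-strengthening and a Γ₂-strengthening of π with both coefficients positive. Then Γ₁ and Γ₂ induce the same conditional: π^{Γ₁} = π^{Γ₂}. In particular, if π^{Γ₁} ≠ π^{Γ₂}, being both Γ₁- and Γ₂-optimistic forces π̃ = π. -/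
open scoped Classical BigOperators

/-!
Relative to `π`, a `Γ`-strengthening with coefficient `a > 0` scales the mass of each point of `Γ`
by `a / π(Γ) + 1 - a ≥ 1` and that of each point outside `Γ` by `1 - a < 1`. Hence `Γ` is recovered
from `π̃` as the set where `π̃ ≥ π`, and two such strengthenings that agree have the same `Γ`, so
the same conditional.
-/

section

variable {Θ : Type*}

/-- `a • π^Γ + (1 - a) • π`, with `π(Γ)` passed as the parameter `p`. -/
noncomputable def strengthening (π : Θ → ℝ) (Γ : Finset Θ) (p a : ℝ) (θ : Θ) : ℝ :=
  a * (if θ ∈ Γ then π θ / p else 0) + (1 - a) * π θ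

variable {π : Θ → ℝ} {Γ Γ₁ Γ₂ : Finset Θ} {p p₁ p₂ a a₁ a₂ : ℝ} {θ : Θ}

lemma le_strengthening_of_mem (hθ : θ ∈ Γ) (hπ : 0 ≤ π θ) (hp0 : 0 < p) (hp1 : p ≤ 1)
    (ha : 0 ≤ a) : π θ ≤ strengthening π Γ p a θ := by
  have hdiv : π θ ≤ π θ / p := le_div_self hπ hp0 hp1
  rw [strengthening, if_pos hθ]
  nlinarith

lemma strengthening_lt_of_notMem (hθ : θ ∉ Γ) (hπ : 0 < π θ) (ha : 0 < a) :
    strengthening π Γ p a θ < π θ := by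
  rw [strengthening, if_neg hθ]
  nlinarith

lemma mem_of_strengthening_apply_eq
    (h : strengthening π Γ₁ p₁ a₁ θ = strengthening π Γ₂ p₂ a₂ θ) (hθ : θ ∈ Γ₁)
    (hπ : 0 < π θ) (hp0 : 0 < p₁) (hp1 : p₁ ≤ 1) (ha₁ : 0 ≤ a₁) (ha₂ : 0 < a₂) : θ ∈ Γ₂ := by
  by_contra hθ₂
  have hle := le_strengthening_of_mem hθ hπ.le hp0 hp1 ha₁
  rw [h] at hle
  exact hle.not_gt (strengthening_lt_of_notMem hθ₂ hπ ha₂)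

lemma eq_of_strengthening_eq (h : strengthening π Γ₁ p₁ a₁ = strengthening π Γ₂ p₂ a₂)
    (hπ : ∀ θ, 0 < π θ) (hp₁0 : 0 < p₁) (hp₁1 : p₁ ≤ 1) (hp₂0 : 0 < p₂) (hp₂1 : p₂ ≤ 1)
    (ha₁ : 0 < a₁) (ha₂ : 0 < a₂) : Γ₁ = Γ₂ :=
  Finset.ext fun θ =>
    ⟨fun hθ => mem_of_strengthening_apply_eq (congrFun h θ) hθ (hπ θ) hp₁0 hp₁1 ha₁.le ha₂,
      fun hθ => mem_of_strengthening_apply_eq (congrFun h θ).symm hθ (hπ θ) hp₂0 hp₂1 ha₂.le ha₁⟩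

end

theorem two_strengthenings_same_conditional_general
    {Θ : Type*} [Fintype Θ]
    (π πt : Θ → ℝ) (Γ₁ Γ₂ : Finset Θ)
    (hπ0 : ∀ θ, 0 < π θ)
    (p₁ p₂ : ℝ) (hp₁ : p₁ = ∑ θ ∈ Γ₁, π θ) (hp₂ : p₂ = ∑ θ ∈ Γ₂, π θ)
    (hp₁0 : 0 < p₁) (hp₁1 : p₁ < 1) (hp₂0 : 0 < p₂) (hp₂1 : p₂ < 1)
    (a₁ a₂ : ℝ) (ha₁0 : 0 < a₁) (ha₂0 : 0 < a₂)
    (h₁ : ∀ θ, πt θ = a₁ * (if θ ∈ Γ₁ then π θ / p₁ else 0) + (1 - a₁) * π θ)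
    (h₂ : ∀ θ, πt θ = a₂ * (if θ ∈ Γ₂ then π θ / p₂ else 0) + (1 - a₂) * π θ) :
    ∀ θ, (if θ ∈ Γ₁ then π θ / p₁ else 0) = (if θ ∈ Γ₂ then π θ / p₂ else 0) := by
  have hstr : strengthening π Γ₁ p₁ a₁ = strengthening π Γ₂ p₂ a₂ :=
    funext fun θ => (h₁ θ).symm.trans (h₂ θ)
  obtain rfl : Γ₁ = Γ₂ :=
    eq_of_strengthening_eq hstr hπ0 hp₁0 hp₁1.le hp₂0 hp₂1.le ha₁0 ha₂0
  obtain rfl : p₁ = p₂ := hp₁.trans hp₂.symm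
  exact fun _ => rfl

/-- if `π̃ ≠ π` is simultaneously a `Γ₁`-strengthening and a
`Γ₂`-strengthening of `π` with both coefficients positive, then
`π^{Γ₁} = π^{Γ₂}`. -/
theorem two_strengthenings_same_conditional
    {Θ : Type*} [Fintype Θ]
    (π πt : Θ → ℝ) (Γ₁ Γ₂ : Finset Θ)
    (hπ0 : ∀ θ, 0 < π θ) (hπ1 : ∑ θ, π θ = 1)
    (p₁ p₂ : ℝ) (hp₁ : p₁ = ∑ θ ∈ Γ₁, π θ) (hp₂ : p₂ = ∑ θ ∈ Γ₂, π θ)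
    (hp₁0 : 0 < p₁) (hp₁1 : p₁ < 1) (hp₂0 : 0 < p₂) (hp₂1 : p₂ < 1)
    (hne : πt ≠ π)
    (a₁ a₂ : ℝ) (ha₁0 : 0 < a₁) (ha₁1 : a₁ ≤ 1) (ha₂0 : 0 < a₂) (ha₂1 : a₂ ≤ 1)
    (h₁ : ∀ θ, πt θ = a₁ * (if θ ∈ Γ₁ then π θ / p₁ else 0) + (1 - a₁) * π θ)
    (h₂ : ∀ θ, πt θ = a₂ * (if θ ∈ Γ₂ then π θ / p₂ else 0) + (1 - a₂) * π θ) :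
    ∀ θ, (if θ ∈ Γ₁ then π θ / p₁ else 0) = (if θ ∈ Γ₂ then π θ / p₂ else 0) :=
  two_strengthenings_same_conditional_general π πt Γ₁ Γ₂ hπ0 p₁ p₂ hp₁ hp₂ hp₁0 hp₁1 hp₂0 hp₂1 a₁ a₂
    ha₁0 ha₂0 h₁ h₂
end

section
/- Let Θ be a finite subset of ℝ with full-support priors π, π̃. Then π̃ ≥_lr π (i.e., π̃(θ)/π(θ) increasing in θ) if and only if π̃ can be obtained from π by a finite sequence of upper-set strengthenings: there exist upper sets Γ₁,...,Γ_k and coefficients a₁,...,a_k ∈ [0,1] such that setting π₀ = π and π_i = a_i·π_{i−1}^{Γ_i} + (1−a_i)·π_{i−1}, we have π_k = π̃. -/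
open scoped Classical BigOperators

/-!
Write `r = π̃ / π`, which is monotone exactly when `π̃ ≥_lr π`, and list `Θ` increasingly as
`θ₀ < ⋯ < θ_k`. The priors proportional to `π · r(min · θ_j)` interpolate between `π`
(`j = 0`, where the factor is constant) and `π̃` (`j = k`). Passing from `θ_j` to `θ_{j+1}`
multiplies the weights on the upper set `{θ ≥ θ_{j+1}}` by `r θ_{j+1} / r θ_j ≥ 1`, on which the
current weights are proportional to `π`; renormalising such a rescaling is an upper-set
strengthening. Conversely, a strengthening multiplies a prior `p` by the nonnegative monotone factor
`a · 1_Γ / p(Γ) + (1 - a)`, so a chain of them keeps `π̃ / π` monotone.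
-/

theorem Fin.castSucc_covBy_succ {k : ℕ} (i : Fin k) : i.castSucc ⋖ i.succ :=
  ⟨Fin.castSucc_lt_succ, fun j h₁ h₂ => by rw [Fin.lt_def] at h₁ h₂; simp at h₁ h₂; omega⟩

noncomputable section

namespace Prior

variable {Θ : Type*}

section Normalize

variable [Fintype Θ]

def normalize (w : Θ → ℝ) : Θ → ℝ := fun θ => w θ / ∑ θ', w θ'

theorem normalize_eq_self {p : Θ → ℝ} (hp : ∑ θ, p θ = 1) : normalize p = p := by
  funext θ
  simp [normalize, hp]

theorem normalize_mul_const (w : Θ → ℝ) {c : ℝ} (hc : c ≠ 0) :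
    normalize (fun θ => w θ * c) = normalize w := by
  funext θ
  simp only [normalize, ← Finset.sum_mul]
  exact mul_div_mul_right _ _ hc

theorem sum_normalize_pos {w : Θ → ℝ} (hw : ∀ θ, 0 < w θ) {Γ : Finset Θ} (hΓ : Γ.Nonempty) :
    0 < ∑ θ ∈ Γ, normalize w θ := by
  have : Nonempty Θ := ⟨hΓ.choose⟩
  simp only [normalize, ← Finset.sum_div]
  exact div_pos (Finset.sum_pos (fun θ _ => hw θ) hΓ)
    (Finset.sum_pos (fun θ _ => hw θ) Finset.univ_nonempty)

end Normalize

section Strengthen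

variable [DecidableEq Θ]

def strengthen (Γ : Finset Θ) (a : ℝ) (p : Θ → ℝ) : Θ → ℝ := fun θ =>
  a * (if θ ∈ Γ then p θ / ∑ θ' ∈ Γ, p θ' else 0) + (1 - a) * p θ

def strengthenFactor (Γ : Finset Θ) (a : ℝ) (p : Θ → ℝ) : Θ → ℝ := fun θ =>
  a * (if θ ∈ Γ then (∑ θ' ∈ Γ, p θ')⁻¹ else 0) + (1 - a)

theorem strengthen_eq_strengthenFactor_mul (Γ : Finset Θ) (a : ℝ) (p : Θ → ℝ) :
    strengthen Γ a p = strengthenFactor Γ a p * p := by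
  funext θ
  simp only [strengthen, strengthenFactor, Pi.mul_apply]
  split_ifs <;> ring

theorem strengthenFactor_nonneg {Γ : Finset Θ} {a : ℝ} {p : Θ → ℝ} (ha₀ : 0 ≤ a) (ha₁ : a ≤ 1)
    (hΓ : 0 ≤ ∑ θ ∈ Γ, p θ) (θ : Θ) :
    0 ≤ strengthenFactor Γ a p θ := by
  have : 0 ≤ if θ ∈ Γ then (∑ θ' ∈ Γ, p θ')⁻¹ else 0 := by
    split_ifs
    exacts [inv_nonneg.2 hΓ, le_rfl]
  unfold strengthenFactor
  nlinarith

theorem exists_normalize_eq_strengthen_of_scale [Fintype Θ]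
    {w w' : Θ → ℝ} {Γ : Finset Θ} {s : ℝ} (hw : ∀ θ, 0 < w θ) (hΓ : Γ.Nonempty) (hs : 1 ≤ s)
    (h_on : ∀ θ ∈ Γ, w' θ = s * w θ) (h_off : ∀ θ ∉ Γ, w' θ = w θ) :
    ∃ a, (0 ≤ a ∧ a ≤ 1) ∧ normalize w' = strengthen Γ a (normalize w) := by
  have : Nonempty Θ := ⟨hΓ.choose⟩
  obtain ⟨W, hW_def⟩ : ∃ W, ∑ θ, w θ = W := ⟨_, rfl⟩
  obtain ⟨S, hS_def⟩ : ∃ S, ∑ θ ∈ Γ, w θ = S := ⟨_, rfl⟩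
  have hS : 0 < S := hS_def ▸ Finset.sum_pos (fun θ _ => hw θ) hΓ
  have hW : 0 < W := hW_def ▸ Finset.sum_pos (fun θ _ => hw θ) Finset.univ_nonempty
  have hW' : ∑ θ, w' θ = W + (s - 1) * S := by
    have h_in : ∑ θ ∈ Γ, w' θ = s * S := by
      rw [← hS_def, Finset.mul_sum]
      exact Finset.sum_congr rfl h_on
    have h_out : ∑ θ ∈ Γᶜ, w' θ = ∑ θ ∈ Γᶜ, w θ :=
      Finset.sum_congr rfl fun θ hθ => h_off θ (Finset.mem_compl.1 hθ)
    rw [← Finset.sum_add_sum_compl Γ w', ← hW_def, ← Finset.sum_add_sum_compl Γ w, h_in, h_out,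
      hS_def]
    ring
  have hW'_pos : 0 < W + (s - 1) * S := by nlinarith
  refine ⟨1 - W / (W + (s - 1) * S), ⟨?_, ?_⟩, ?_⟩
  · rw [sub_nonneg, div_le_one hW'_pos]
    nlinarith
  · linarith [div_pos hW hW'_pos]
  funext θ
  have hΓ_mass : ∑ θ ∈ Γ, normalize w θ = S / W := by
    simp only [normalize, ← Finset.sum_div, hS_def, hW_def]
  simp only [strengthen, hΓ_mass]
  simp only [normalize, hW', hW_def]
  by_cases hθ : θ ∈ Γ
  · rw [h_on θ hθ, if_pos hθ]
    field_simp
    ring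
  · rw [h_off θ hθ, if_neg hθ]
    field_simp
    ring

end Strengthen

section Density

variable [Preorder Θ]

def HasMonotoneDensity (q p : Θ → ℝ) : Prop :=
  ∃ g : Θ → ℝ, Monotone g ∧ (∀ θ, 0 ≤ g θ) ∧ q = g * p

theorem hasMonotoneDensity_refl (p : Θ → ℝ) : HasMonotoneDensity p p :=
  ⟨1, monotone_const, fun _ => zero_le_one, (one_mul p).symm⟩

theorem HasMonotoneDensity.mul_le_mul_of_le {q p : Θ → ℝ} (h : HasMonotoneDensity q p)
    (hp : ∀ θ, 0 ≤ p θ) {θ θ' : Θ} (hle : θ ≤ θ') : q θ * p θ' ≤ q θ' * p θ := by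
  obtain ⟨g, hg, -, rfl⟩ := h
  calc g θ * p θ * p θ' = g θ * (p θ * p θ') := by ring
    _ ≤ g θ' * (p θ * p θ') := mul_le_mul_of_nonneg_right (hg hle) (mul_nonneg (hp θ) (hp θ'))
    _ = g θ' * p θ' * p θ := by ring

variable [DecidableEq Θ] {Γ : Finset Θ} {a : ℝ} {p : Θ → ℝ}

theorem monotone_strengthenFactor (hΓ : IsUpperSet (Γ : Set Θ)) (ha : 0 ≤ a)
    (hS : 0 ≤ ∑ θ ∈ Γ, p θ) : Monotone (strengthenFactor Γ a p) := by
  intro θ θ' hle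
  unfold strengthenFactor
  gcongr
  by_cases hθ : θ ∈ Γ
  · rw [if_pos hθ, if_pos (Finset.mem_coe.1 (hΓ hle hθ))]
  · rw [if_neg hθ]
    split_ifs
    exacts [inv_nonneg.2 hS, le_rfl]

theorem HasMonotoneDensity.strengthen {q : Θ → ℝ} (h : HasMonotoneDensity q p)
    (hΓ : IsUpperSet (Γ : Set Θ)) (ha₀ : 0 ≤ a) (ha₁ : a ≤ 1) (hS : 0 ≤ ∑ θ ∈ Γ, q θ) :
    HasMonotoneDensity (Prior.strengthen Γ a q) p := by
  obtain ⟨g, hg, hg₀, rfl⟩ := h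
  refine ⟨strengthenFactor Γ a (g * p) * g,
    (monotone_strengthenFactor hΓ ha₀ hS).mul hg (strengthenFactor_nonneg ha₀ ha₁ hS) hg₀,
    fun θ => mul_nonneg (strengthenFactor_nonneg ha₀ ha₁ hS θ) (hg₀ θ), ?_⟩
  rw [strengthen_eq_strengthenFactor_mul, mul_assoc]

theorem HasMonotoneDensity.of_strengthen_chain {k : ℕ} {Γ : Fin k → Finset Θ} {a : Fin k → ℝ}
    {seq : Fin (k + 1) → Θ → ℝ} (hΓ : ∀ i, IsUpperSet (Γ i : Set Θ))
    (ha : ∀ i, 0 ≤ a i ∧ a i ≤ 1) (hS : ∀ i, 0 ≤ ∑ θ ∈ Γ i, seq i.castSucc θ)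
    (hstep : ∀ i, seq i.succ = Prior.strengthen (Γ i) (a i) (seq i.castSucc)) (j : Fin (k + 1)) :
    HasMonotoneDensity (seq j) (seq 0) := by
  induction j using Fin.induction with
  | zero => exact hasMonotoneDensity_refl _
  | succ i ih => exact hstep i ▸ ih.strengthen (hΓ i) (ha i).1 (ha i).2 (hS i)

end Density

section Truncation

variable [Fintype Θ] [LinearOrder Θ] {π r : Θ → ℝ}

def truncatedPrior (π r : Θ → ℝ) (t : Θ) : Θ → ℝ := normalize fun θ => π θ * r (min θ t)

theorem truncatedPrior_of_isBot (hπ : ∑ θ, π θ = 1) {t : Θ} (ht : IsBot t) (hr : r t ≠ 0) :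
    truncatedPrior π r t = π := by
  simp only [truncatedPrior, fun θ => min_eq_right (ht θ)]
  rw [normalize_mul_const _ hr, normalize_eq_self hπ]

theorem truncatedPrior_of_isTop {t : Θ} (ht : IsTop t) :
    truncatedPrior π r t = normalize fun θ => π θ * r θ := by
  simp only [truncatedPrior, fun θ => min_eq_left (ht θ)]

theorem sum_truncatedPrior_pos (hπ : ∀ θ, 0 < π θ) (hr₀ : ∀ θ, 0 < r θ) (t : Θ)
    {Γ : Finset Θ} (hΓ : Γ.Nonempty) : 0 < ∑ θ ∈ Γ, truncatedPrior π r t θ :=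
  sum_normalize_pos (fun θ => mul_pos (hπ θ) (hr₀ _)) hΓ

theorem exists_truncatedPrior_eq_strengthen_of_covBy (hπ : ∀ θ, 0 < π θ) (hr : Monotone r)
    (hr₀ : ∀ θ, 0 < r θ) {t t' : Θ} (htt' : t ⋖ t') :
    ∃ a, (0 ≤ a ∧ a ≤ 1) ∧
      truncatedPrior π r t' = strengthen {θ | t' ≤ θ} a (truncatedPrior π r t) := by
  refine exists_normalize_eq_strengthen_of_scale (s := r t' / r t)
    (fun θ => mul_pos (hπ θ) (hr₀ _)) ⟨t', by simp⟩ ((one_le_div (hr₀ t)).2 (hr htt'.le)) ?_ ?_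
  · intro θ hθ
    rw [Finset.mem_filter] at hθ
    rw [min_eq_right hθ.2, min_eq_right (htt'.le.trans hθ.2)]
    field_simp [(hr₀ t).ne']
  · intro θ hθ
    have hlt : θ < t' := not_le.1 fun h => hθ (by simp [h])
    rw [min_eq_left hlt.le, min_eq_left (htt'.le_of_lt hlt)]

end Truncation

end Prior

end

open Prior in
/-- `π̃ ≥_lr π` iff `π̃` is obtained from `π` by a finite
sequence of upper-set strengthenings. -/
theorem lr_iff_monotonic_strengthening
    {Θ : Type*} [Fintype Θ] [LinearOrder Θ]
    (π πt : Θ → ℝ)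
    (hπ0 : ∀ θ, 0 < π θ) (hπ1 : ∑ θ, π θ = 1)
    (hπt0 : ∀ θ, 0 < πt θ) (hπt1 : ∑ θ, πt θ = 1) :
    (∀ θ θ' : Θ, θ ≤ θ' → πt θ * π θ' ≤ πt θ' * π θ)
      ↔ ∃ (k : ℕ) (Γ : Fin k → Finset Θ) (a : Fin k → ℝ)
          (seq : Fin (k + 1) → Θ → ℝ),
          (∀ i, ∀ θ ∈ Γ i, ∀ θ' : Θ, θ ≤ θ' → θ' ∈ Γ i) ∧
          (∀ i, 0 ≤ a i ∧ a i ≤ 1) ∧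
          seq 0 = π ∧ seq (Fin.last k) = πt ∧
          ∀ i : Fin k,
            0 < (∑ θ ∈ Γ i, seq i.castSucc θ) ∧
            ∀ θ, seq i.succ θ =
              a i * (if θ ∈ Γ i then
                  seq i.castSucc θ / (∑ θ' ∈ Γ i, seq i.castSucc θ') else 0)
                + (1 - a i) * seq i.castSucc θ := by
  constructor
  · intro h_lr
    have : Nonempty Θ := by
      by_contra hΘ
      simp [not_nonempty_iff.1 hΘ] at hπ1
    obtain ⟨k, hk⟩ := Nat.exists_eq_succ_of_ne_zero (Fintype.card_ne_zero (α := Θ))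
    let e := monoEquivOfFin Θ hk
    let r := fun θ => πt θ / π θ
    have hr : Monotone r := fun θ θ' hle => (div_le_div_iff₀ (hπ0 θ) (hπ0 θ')).2 (h_lr θ θ' hle)
    have hr₀ : ∀ θ, 0 < r θ := fun θ => div_pos (hπt0 θ) (hπ0 θ)
    choose a ha hstep using fun i : Fin k => exists_truncatedPrior_eq_strengthen_of_covBy hπ0 hr
      hr₀ ((apply_covBy_apply_iff e).2 (Fin.castSucc_covBy_succ i))
    refine ⟨k, fun i => {θ | e i.succ ≤ θ}, a, fun j => truncatedPrior π r (e j),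
      fun i θ hθ θ' hle =>
        Finset.mem_filter.2 ⟨Finset.mem_univ _, (Finset.mem_filter.1 hθ).2.trans hle⟩,
      ha, truncatedPrior_of_isBot hπ1 (fun θ => e.le_symm_apply.1 (Fin.zero_le _)) (hr₀ _).ne', ?_,
      fun i => ⟨sum_truncatedPrior_pos hπ0 hr₀ _ ⟨e i.succ, by simp⟩, congrFun (hstep i)⟩⟩
    have hπr : (fun θ => π θ * r θ) = πt := funext fun θ => mul_div_cancel₀ _ (hπ0 θ).ne'
    show truncatedPrior π r (e (Fin.last k)) = πt
    rw [truncatedPrior_of_isTop (fun θ => e.symm_apply_le.1 (Fin.le_last _)), hπr,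
      normalize_eq_self hπt1]
  · rintro ⟨k, Γ, a, seq, hΓ, ha, h0, hlast, hstep⟩ θ θ' hle
    have h_density := HasMonotoneDensity.of_strengthen_chain (fun i θ θ' hle hθ => hΓ i θ hθ θ' hle)
      ha (fun i => (hstep i).1.le) (fun i => funext (hstep i).2) (Fin.last k)
    rw [hlast, h0] at h_density
    exact h_density.mul_le_mul_of_le (fun θ => (hπ0 θ).le) hle
end
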